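/- arXiv:math/0405135 — 2 statements merged into one kernel-verified Lean document; each statement's English description precedes it below -/
import Mathlib

section
/- Let F be a field of characteristic p > 0 and V = F^n. Suppose G ≤ GL(V) is a finite group which fixes a hyperplane H in V pointwise, let σ be a diagonalizable reflection in G of maximal order, let ω = det(σ), and let K ⊴ G be the subgroup generated by the transvections in G. Then: (i) for every transvection t in K, σ^{-1} t σ is a transvection in K with root vector α_{σ^{-1}tσ} = ω·α_t (so conjugation by σ on K translates into multiplication by ω on the set R(K) of root vectors); and (ii) R(K) is closed under addition and under multiplication by elements of the subfield F_p(ω) of F generated by ω, i.e., R(K) is an F_p(ω)-subspace of V (contained in H). -/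
open Matrix

/-- `α` is the root vector of `g` with respect to the linear form `v ↦ ∑ i, c i * v i`:
`g v = v + l(v) • α` for all `v`.  In particular `g` fixes the hyperplane `ker l` pointwise. -/
def IsRootVec {F : Type*} [Field F] {n : ℕ} (c : Fin n → F) (g : GL (Fin n) F)
    (α : Fin n → F) : Prop :=
  ∀ v : Fin n → F, (g : Matrix (Fin n) (Fin n) F).mulVec v = v + (∑ i, c i * v i) • α

/-- `g` is a transvection about the hyperplane defined by `c`:
its root vector is nonzero and lies in the hyperplane. -/
def IsTransvection {F : Type*} [Field F] {n : ℕ} (c : Fin n → F) (g : GL (Fin n) F) : Prop :=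
  ∃ α : Fin n → F, α ≠ 0 ∧ (∑ i, c i * α i) = 0 ∧ IsRootVec c g α

/-- `g` is a diagonalizable reflection about the hyperplane defined by `c`
(the identity is allowed): its root vector does not lie in the hyperplane, or is zero. -/
def IsDiagReflection {F : Type*} [Field F] {n : ℕ} (c : Fin n → F) (g : GL (Fin n) F) : Prop :=
  ∃ α : Fin n → F, IsRootVec c g α ∧ (α = 0 ∨ (∑ i, c i * α i) ≠ 0)

section Aux
variable {F : Type*} [Field F] {n : ℕ} {c : Fin n → F}

lemma lsum_eq_dot (v : Fin n → F) : (∑ i, c i * v i) = c ⬝ᵥ v := rfl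

lemma rootVec_one : IsRootVec c 1 (0 : Fin n → F) := by
  intro v
  simp

lemma rootVec_mul {g h : GL (Fin n) F} {α β : Fin n → F}
    (hg : IsRootVec c g α) (hh : IsRootVec c h β) :
    IsRootVec c (g * h) ((1 + ∑ i, c i * β i) • α + β) := by
  intro v
  rw [Units.val_mul, ← Matrix.mulVec_mulVec, hh v, hg _]
  simp only [lsum_eq_dot, dotProduct_add, dotProduct_smul, smul_eq_mul]
  module

lemma rootVec_unique {g : GL (Fin n) F} {α α' v₀ : Fin n → F}
    (hv₀ : (∑ i, c i * v₀ i) = 1) (h : IsRootVec c g α) (h' : IsRootVec c g α') : α = α' := by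
  have := (h v₀).symm.trans (h' v₀)
  rw [hv₀, one_smul, one_smul] at this
  exact add_left_cancel this

lemma rootVec_det {g : GL (Fin n) F} {α : Fin n → F} (hg : IsRootVec c g α) :
    Matrix.det (g : Matrix (Fin n) (Fin n) F) = 1 + ∑ i, c i * α i := by
  have hmat : (g : Matrix (Fin n) (Fin n) F)
      = 1 + Matrix.replicateCol (Fin 1) α * Matrix.replicateRow (Fin 1) c := by
    ext i j
    have h2 := hg ((Pi.single j 1 : Fin n → F))
    rw [Matrix.mulVec_single] at h2
    have h3 := congrFun h2 i
    have hsum : (∑ i, c i * (Pi.single j 1 : Fin n → F) i) = c j := by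
      simp [Pi.single_apply, mul_ite, Finset.sum_ite_eq']
    rw [hsum] at h3
    simp only [Pi.smul_apply, Matrix.col_apply, op_smul_eq_mul, mul_one] at h3
    rw [h3]
    simp [Matrix.one_apply, Matrix.mul_apply, Pi.single_apply, mul_comm]
  rw [hmat, Matrix.det_one_add_mul_comm, Matrix.det_fin_one]
  simp [Matrix.mul_apply, Matrix.one_apply, mul_comm]

end Aux

/-- Lemma 2.1(1) of Hartmann–Shepler, "Jacobians of reflection groups".
Let `F` have characteristic `p > 0` and let `G ≤ GL(V)`, `V = Fⁿ`, be a finite group fixing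
the hyperplane `H = ker l` pointwise (`l = ∑ cᵢ zᵢ`, `c ≠ 0`).  Let `σ ∈ G` be a
diagonalizable reflection of maximal order, `ω = det σ`, and let `K` be the subgroup
generated by the transvections in `G`, with set of root vectors `R = R(K)`.  Then
(i) for every transvection `t ∈ K` with root vector `α`, the conjugate `σ⁻¹tσ` is a
transvection in `K` with root vector `ω • α`; and
(ii) `R` is contained in `H`, contains `0`, and is closed under addition and under
multiplication by the subfield `F_p(ω)` generated by `ω`; that is, `R` is an
`F_p(ω)`-subspace of `V` contained in `H`. -/
theorem jacobians_lemma2_part1 {F : Type*} [Field F] {n p : ℕ} [CharP F p] (hp : 0 < p)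
    (G : Subgroup (GL (Fin n) F)) [Finite G]
    (c : Fin n → F) (hc : c ≠ 0)
    (hfix : ∀ g ∈ G, ∀ v : Fin n → F, (∑ i, c i * v i) = 0 →
      (g : Matrix (Fin n) (Fin n) F).mulVec v = v)
    (σ : GL (Fin n) F) (hσG : σ ∈ G) (hσ : IsDiagReflection c σ)
    (hσmax : ∀ τ ∈ G, IsDiagReflection c τ → orderOf τ ≤ orderOf σ)
    (ω : F) (hω : ω = Matrix.det (σ : Matrix (Fin n) (Fin n) F))
    (K : Subgroup (GL (Fin n) F))
    (hK : K = Subgroup.closure {g | g ∈ G ∧ IsTransvection c g})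
    (R : Set (Fin n → F))
    (hR : R = {α | ∃ g ∈ K, IsRootVec c g α}) :
    (∀ t ∈ K, IsTransvection c t → ∀ α : Fin n → F, IsRootVec c t α →
      σ⁻¹ * t * σ ∈ K ∧ IsTransvection c (σ⁻¹ * t * σ) ∧
        IsRootVec c (σ⁻¹ * t * σ) (ω • α)) ∧
    (∀ α ∈ R, (∑ i, c i * α i) = 0) ∧
    (0 : Fin n → F) ∈ R ∧
    (∀ α ∈ R, ∀ β ∈ R, α + β ∈ R) ∧
    (∀ x ∈ Subfield.closure {ω}, ∀ α ∈ R, x • α ∈ R) ∧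
    (∃ W : Submodule (Subfield.closure {ω}) (Fin n → F), (W : Set (Fin n → F)) = R) := by
  -- a vector on which the linear form takes value 1
  obtain ⟨i₀, hi₀⟩ : ∃ i, c i ≠ 0 := by
    by_contra h
    push_neg at h
    exact hc (funext h)
  set v₀ : Fin n → F := (c i₀)⁻¹ • (Pi.single i₀ 1 : Fin n → F) with hv₀def
  have hv₀ : (∑ i, c i * v₀ i) = 1 := by
    simp [hv₀def, Pi.single_apply, mul_ite, Finset.sum_ite_eq', hi₀]
  have hKG : K ≤ G := by
    rw [hK]
    exact (Subgroup.closure_le G).mpr (fun g hg => hg.1)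
  -- every element of G has a root vector
  have hex : ∀ g ∈ G, ∃ α, IsRootVec c g α := by
    intro g hg
    refine ⟨(g : Matrix (Fin n) (Fin n) F).mulVec v₀ - v₀, fun v => ?_⟩
    have h1 : (∑ i, c i * (v - (∑ i, c i * v i) • v₀) i) = 0 := by
      simp only [lsum_eq_dot] at *
      rw [dotProduct_sub, dotProduct_smul, hv₀]
      simp
    have h2 := hfix g hg _ h1
    have h3 : (g : Matrix (Fin n) (Fin n) F).mulVec v
        = (g : Matrix (Fin n) (Fin n) F).mulVec (v - (∑ i, c i * v i) • v₀)
          + (∑ i, c i * v i) • (g : Matrix (Fin n) (Fin n) F).mulVec v₀ := by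
      have h4 : (v - (∑ i, c i * v i) • v₀) + (∑ i, c i * v i) • v₀ = v := by module
      rw [← Matrix.mulVec_smul, ← Matrix.mulVec_add, h4]
    rw [h3, h2]
    module
  -- determinant-1 on K
  have hdet1 : ∀ g ∈ K, Matrix.det ((g : GL (Fin n) F) : Matrix (Fin n) (Fin n) F) = 1 := by
    have hker : K ≤ (Matrix.detMonoidHom.comp (Units.coeHom (Matrix (Fin n) (Fin n) F))).ker := by
      rw [hK]
      refine (Subgroup.closure_le _).mpr ?_
      rintro t ⟨htG, β, hβ0, hβH, hβroot⟩
      have : Matrix.det ((t : GL (Fin n) F) : Matrix (Fin n) (Fin n) F) = 1 := by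
        rw [rootVec_det hβroot, hβH, add_zero]
      simpa [MonoidHom.mem_ker] using this
    intro g hg
    simpa [MonoidHom.mem_ker] using hker hg
  have hKH : ∀ g ∈ K, ∀ α, IsRootVec c g α → (∑ i, c i * α i) = 0 := by
    intro g hg α hα
    have h1 := rootVec_det hα
    rw [hdet1 g hg] at h1
    exact (left_eq_add.mp h1)
  -- data for σ
  obtain ⟨γ, hγroot, hγdisj⟩ := hσ
  have hωγ : ω = 1 + ∑ i, c i * γ i := hω.trans (rootVec_det hγroot)
  have hω0 : ω ≠ 0 := by
    have h1 : Matrix.det (((σ * σ⁻¹ : GL (Fin n) F)) : Matrix (Fin n) (Fin n) F) = 1 := by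
      rw [mul_inv_cancel]
      simp
    rw [Units.val_mul, Matrix.det_mul, ← hω] at h1
    exact left_ne_zero_of_mul_eq_one h1
  obtain ⟨γ', hγ'root⟩ := hex σ⁻¹ (G.inv_mem hσG)
  have hγ' : γ' = -(ω⁻¹ • γ) := by
    have hcomp := rootVec_mul hγ'root hγroot
    rw [inv_mul_cancel] at hcomp
    have h0 : (1 + ∑ i, c i * γ i) • γ' + γ = 0 :=
      (rootVec_unique hv₀ rootVec_one hcomp).symm
    rw [← hωγ] at h0
    have h1 : ω • γ' = -γ := eq_neg_of_add_eq_zero_left h0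
    calc γ' = ω⁻¹ • (ω • γ') := by rw [smul_smul, inv_mul_cancel₀ hω0, one_smul]
      _ = -(ω⁻¹ • γ) := by rw [h1, smul_neg]
  -- the conjugation computation
  have hconj_root : ∀ (g : GL (Fin n) F) (α : Fin n → F), IsRootVec c g α →
      (∑ i, c i * α i) = 0 → IsRootVec c (σ⁻¹ * g * σ) (ω • α) := by
    intro g α hα hαH
    have h1 := rootVec_mul hγ'root hα
    rw [hαH, add_zero, one_smul] at h1
    have h2 := rootVec_mul h1 hγroot
    rw [← hωγ] at h2
    have h3 : ω • (γ' + α) + γ = ω • α := by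
      rw [hγ', smul_add, smul_neg, smul_smul, mul_inv_cancel₀ hω0, one_smul]
      abel
    rwa [h3] at h2
  -- conjugation preserves transvections of G
  have htransconj : ∀ t ∈ G, IsTransvection c t →
      (σ⁻¹ * t * σ ∈ G ∧ IsTransvection c (σ⁻¹ * t * σ)) := by
    rintro t htG ⟨β, hβ0, hβH, hβroot⟩
    refine ⟨G.mul_mem (G.mul_mem (G.inv_mem hσG) htG) hσG,
      ω • β, smul_ne_zero hω0 hβ0, ?_, hconj_root t β hβroot hβH⟩
    simp only [lsum_eq_dot] at *
    rw [dotProduct_smul, hβH, smul_zero]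
  -- K is stable under conjugation by σ
  have hconjK : ∀ g ∈ K, σ⁻¹ * g * σ ∈ K := by
    intro g hg
    have hle : K ≤ K.comap (MulAut.conj (σ⁻¹ : GL (Fin n) F)).toMonoidHom := by
      conv_lhs => rw [hK]
      refine (Subgroup.closure_le _).mpr ?_
      rintro t ⟨htG, htt⟩
      have heq : (MulAut.conj (σ⁻¹ : GL (Fin n) F)).toMonoidHom t = σ⁻¹ * t * σ := by
        simp [MulAut.conj_apply, mul_assoc]
      simp only [SetLike.mem_coe, Subgroup.mem_comap, heq]
      rw [hK]
      exact Subgroup.subset_closure ⟨(htransconj t htG htt).1, (htransconj t htG htt).2⟩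
    have h2 := hle hg
    rw [Subgroup.mem_comap] at h2
    have heq : (MulAut.conj (σ⁻¹ : GL (Fin n) F)).toMonoidHom g = σ⁻¹ * g * σ := by
      simp [MulAut.conj_apply, mul_assoc]
    rwa [heq] at h2
  -- basic properties of R
  have hRH : ∀ α ∈ R, (∑ i, c i * α i) = 0 := by
    rw [hR]
    rintro α ⟨g, hg, hα⟩
    exact hKH g hg α hα
  have hR0 : (0 : Fin n → F) ∈ R := by
    rw [hR]; exact ⟨1, K.one_mem, rootVec_one⟩
  have hRadd : ∀ α ∈ R, ∀ β ∈ R, α + β ∈ R := by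
    rw [hR]
    rintro α ⟨g, hg, hα⟩ β ⟨h, hh, hβ⟩
    refine ⟨g * h, K.mul_mem hg hh, ?_⟩
    have h1 := rootVec_mul hα hβ
    rwa [hKH h hh β hβ, add_zero, one_smul] at h1
  have hRneg : ∀ α ∈ R, -α ∈ R := by
    rw [hR]
    rintro α ⟨g, hg, hα⟩
    obtain ⟨δ, hδ⟩ := hex g⁻¹ (G.inv_mem (hKG hg))
    refine ⟨g⁻¹, K.inv_mem hg, ?_⟩
    have hcomp := rootVec_mul hα hδ
    rw [mul_inv_cancel] at hcomp
    have h0 : (1 + ∑ i, c i * δ i) • α + δ = 0 :=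
      (rootVec_unique hv₀ rootVec_one hcomp).symm
    rw [hKH g⁻¹ (K.inv_mem hg) δ hδ, add_zero, one_smul] at h0
    have hδα : δ = -α := eq_neg_of_add_eq_zero_right h0
    rwa [hδα] at hδ
  have hRω : ∀ α ∈ R, ω • α ∈ R := by
    intro α hα
    rw [hR] at hα ⊢
    obtain ⟨g, hg, hαg⟩ := hα
    exact ⟨σ⁻¹ * g * σ, hconjK g hg, hconj_root g α hαg (hKH g hg α hαg)⟩
  -- the subring of good scalars
  haveI : NeZero p := ⟨hp.ne'⟩
  haveI hpp : Fact p.Prime := CharP.char_is_prime_of_pos F p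
  letI : Algebra (ZMod p) F := ZMod.algebra F p
  obtain ⟨N, hN0, hNω⟩ : ∃ N, 0 < N ∧ ω ^ N = 1 := by
    have hfin : IsOfFinOrder (⟨σ, hσG⟩ : G) := isOfFinOrder_of_finite _
    obtain ⟨N, hN0, hN⟩ := hfin.exists_pow_eq_one
    refine ⟨N, hN0, ?_⟩
    have hσN : σ ^ N = 1 := by
      have h := congrArg (Subgroup.subtype G) hN
      simpa using h
    have hmat : ((σ : Matrix (Fin n) (Fin n) F)) ^ N = 1 := by
      rw [← Units.val_pow_eq_pow_val, hσN, Units.val_one]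
    rw [hω, ← Matrix.det_pow, hmat, Matrix.det_one]
  have hint : IsIntegral (ZMod p) ω := by
    refine ⟨Polynomial.X ^ N - 1, ?_, ?_⟩
    · simpa using Polynomial.monic_X_pow_sub_C (1 : ZMod p) hN0.ne'
    · simp [hNω]
  set E := Algebra.adjoin (ZMod p) {ω} with hEdef
  haveI : Module.Finite (ZMod p) (Subalgebra.toSubmodule E) :=
    Module.Finite.iff_fg.mpr hint.fg_adjoin_singleton
  haveI : Finite (Subalgebra.toSubmodule E) := Module.finite_of_finite (ZMod p)
  have hEinv : ∀ x ∈ E, x⁻¹ ∈ E := by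
    intro x hx
    rcases eq_or_ne x 0 with rfl | hx0
    · simpa using E.zero_mem
    · have key : ∀ i j : ℕ, i < j → x ^ i = x ^ j → x⁻¹ ∈ E := by
        intro i j hij hpow
        have h1 : x ^ i * x ^ (j - i) = x ^ i * 1 := by
          rw [mul_one, ← pow_add, Nat.add_sub_cancel' hij.le, ← hpow]
        have h2 : x ^ (j - i) = 1 := mul_left_cancel₀ (pow_ne_zero i hx0) h1
        have h4 : x ^ (j - i - 1) * x = 1 := by
          rw [← pow_succ]
          have : j - i - 1 + 1 = j - i := by omega
          rw [this, h2]
        have h5 : x⁻¹ = x ^ (j - i - 1) := inv_eq_of_mul_eq_one_left h4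
        rw [h5]
        exact pow_mem hx _
      obtain ⟨i, j, hne, hij⟩ := Finite.exists_ne_map_eq_of_infinite
        (fun k : ℕ => (⟨x ^ k, (Subalgebra.mem_toSubmodule E).mpr (pow_mem hx k)⟩ :
          Subalgebra.toSubmodule E))
      have hxij : x ^ i = x ^ j := congrArg Subtype.val hij
      rcases hne.lt_or_gt with h | h
      · exact key i j h hxij
      · exact key j i h hxij.symm
  let SF : Subfield F := { E.toSubring with inv_mem' := hEinv }
  let Tsub : Subring F :=
    { carrier := {x : F | ∀ α ∈ R, x • α ∈ R}
      one_mem' := by intro α hα; simpa using hα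
      mul_mem' := by intro a b ha hb α hα; rw [mul_smul]; exact ha _ (hb _ hα)
      zero_mem' := by intro α hα; rw [zero_smul]; exact hR0
      add_mem' := by intro a b ha hb α hα; rw [add_smul]; exact hRadd _ (ha _ hα) _ (hb _ hα)
      neg_mem' := by intro a ha α hα; rw [neg_smul]; exact hRneg _ (ha _ hα) }
  let Talg : Subalgebra (ZMod p) F :=
    { Tsub with
      algebraMap_mem' := by
        intro r
        obtain ⟨k, rfl⟩ := ZMod.natCast_zmod_surjective r
        rw [map_natCast]
        exact natCast_mem Tsub k }
  have hET : E ≤ Talg := by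
    rw [hEdef]
    exact Algebra.adjoin_le (by
      intro x hx
      rw [Set.mem_singleton_iff] at hx
      subst hx
      exact hRω)
  have hscal : ∀ x ∈ Subfield.closure {ω}, ∀ α ∈ R, x • α ∈ R := by
    intro x hx
    have hSF : Subfield.closure {ω} ≤ SF :=
      Subfield.closure_le.mpr (Set.singleton_subset_iff.mpr
        (show ω ∈ SF from Algebra.self_mem_adjoin_singleton _ _))
    have hxE : x ∈ E := hSF hx
    exact hET hxE
  refine ⟨?_, hRH, hR0, hRadd, hscal, ?_⟩
  · rintro t htK ⟨β, hβ0, hβH, hβroot⟩ α hα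
    have hαβ : α = β := rootVec_unique hv₀ hα hβroot
    subst hαβ
    exact ⟨hconjK t htK,
      ⟨ω • α, smul_ne_zero hω0 hβ0, by
        simp only [lsum_eq_dot] at *
        rw [dotProduct_smul, hβH, smul_zero], hconj_root t α hα hβH⟩,
      hconj_root t α hα hβH⟩
  · exact ⟨⟨⟨⟨R, fun {a b} ha hb => hRadd a ha b hb⟩, hR0⟩,
      fun x {α} hα => hscal (x : F) x.2 α hα⟩, rfl⟩
end

section
/- Let F be a field and let A ⊆ F be a finite additive subgroup of F. Then the polynomial f(X) = ∏_{a ∈ A} (X + a) ∈ F[X] is additive, i.e., the polynomial identity f(X + Y) = f(X) + f(Y) holds in the polynomial ring F[X, Y]. -/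
/-!
Work in `K[Y]` with `K = F[x]` and put `q(Y) = f(Y + x) - f(Y) - f(x)`. Since `f(Y + x)` and
`f(Y)` have the same degree `|A|` and the same leading coefficient, and `f(x)` is constant in `Y`,
`q` has degree `< |A|`. For `a ∈ A`, translation by `a` permutes the factors of `f`, so
`f(a + x) = f(x)`, while `f(a) = 0` because `-a ∈ A`. Thus `q` vanishes at the `|A|`
points of `A` and is zero.
-/

open MvPolynomial

theorem AddSubgroup.prod_finite_toFinset_add_left {G M : Type*} [AddGroup G] [CommMonoid M]
    {A : AddSubgroup G} (hA : (A : Set G).Finite) (g : G → M) {a : G} (ha : a ∈ A) :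
    ∏ b ∈ hA.toFinset, g (a + b) = ∏ b ∈ hA.toFinset, g b :=
  Finset.prod_equiv (Equiv.addLeft a) (by simp [A.add_mem_cancel_left ha]) (fun _ _ => rfl)

namespace Polynomial

theorem degree_taylor_sub_lt {R : Type*} [CommRing R] {p : R[X]} (hp : p ≠ 0) (c : R) :
    (taylor c p - p).degree < p.degree :=
  degree_sub_lt_left (degree_taylor p c) ((taylor_injective c).ne_iff' (map_zero _) |>.2 hp)
    (leadingCoeff_taylor c p) |>.trans_eq (degree_taylor p c)

theorem taylor_eq_add_C_eval_of_eval_add {K : Type*} [CommRing K] [IsDomain K] {p : K[X]}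
    {c : K} {s : Finset K} (hs : s.Nonempty) (hdeg : p.natDegree ≤ s.card)
    (hadd : ∀ a ∈ s, p.eval (a + c) = p.eval a + p.eval c) :
    taylor c p = p + C (p.eval c) := by
  rw [← sub_eq_zero, ← sub_sub]
  set q := taylor c p - p - C (p.eval c)
  have hq : q.degree < s.card := by
    refine (degree_sub_le _ _).trans_lt (max_lt ?_ (degree_C_le.trans_lt ?_))
    · obtain rfl | hp := eq_or_ne p 0
      · simp
      · exact (degree_taylor_sub_lt hp c).trans_le (degree_le_of_natDegree_le hdeg)
    · exact_mod_cast hs.card_pos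
  by_contra hq0
  refine hq0 (eq_zero_of_natDegree_lt_card_of_eval_eq_zero' q s (fun a ha => ?_)
    ((natDegree_lt_iff_degree_lt hq0).2 hq))
  simp [q, taylor_eval, hadd a ha]

theorem aeval_X_add_C_eq_of_aeval_add {F K : Type*} [CommRing F] [CommRing K] [IsDomain K]
    [Algebra F K] {f : F[X]} {c : K} {s : Finset K} (hs : s.Nonempty)
    (hdeg : f.natDegree ≤ s.card) (hadd : ∀ a ∈ s, aeval (a + c) f = aeval a f + aeval c f) :
    aeval (X + C c) f = aeval X f + aeval (C c) f := by
  have := taylor_eq_add_C_eval_of_eval_add (p := f.map (algebraMap F K)) hs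
    (natDegree_map_le.trans hdeg) (by simpa only [eval_map_algebraMap] using hadd)
  rw [aeval_X_left_eq_map, ← aeval_map_algebraMap K, ← comp_eq_aeval, ← taylor_apply, this,
    eval_map_algebraMap, ← algebraMap_eq, aeval_algebraMap_apply]

theorem natDegree_prod_X_add_C_le {R : Type*} [CommRing R] (s : Finset R) :
    (∏ b ∈ s, (X + C b)).natDegree ≤ s.card :=
  (natDegree_prod_le _ _).trans <|
    (Finset.sum_le_card_nsmul _ _ 1 fun _ _ => natDegree_add_C.trans_le natDegree_X_le).trans_eq
      (smul_eq_mul _ _ |>.trans (mul_one _))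

section AddSubgroup

variable {F : Type*} [CommRing F] {A : AddSubgroup F} (hA : (A : Set F).Finite)

theorem aeval_add_algebraMap_prod_X_add_C {R : Type*} [CommRing R] [Algebra F R] (y : R) {a : F}
    (ha : a ∈ A) :
    aeval (y + algebraMap F R a) (∏ b ∈ hA.toFinset, (X + C b)) =
      aeval y (∏ b ∈ hA.toFinset, (X + C b)) := by
  simpa only [map_prod, map_add, aeval_X, aeval_C, add_assoc] using
    AddSubgroup.prod_finite_toFinset_add_left hA (fun b => y + algebraMap F R b) ha

theorem eval_prod_X_add_C_of_mem {a : F} (ha : a ∈ A) :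
    (∏ b ∈ hA.toFinset, (X + C b)).eval a = 0 := by
  rw [eval_prod]
  exact Finset.prod_eq_zero (hA.mem_toFinset.2 (A.neg_mem ha)) (by simp)

theorem aeval_algebraMap_add_prod_X_add_C_eq_add {R : Type*} [CommRing R] [Algebra F R] (y : R)
    {a : F} (ha : a ∈ A) :
    aeval (algebraMap F R a + y) (∏ b ∈ hA.toFinset, (X + C b)) =
      aeval (algebraMap F R a) (∏ b ∈ hA.toFinset, (X + C b)) +
        aeval y (∏ b ∈ hA.toFinset, (X + C b)) := by
  rw [add_comm, aeval_add_algebraMap_prod_X_add_C hA y ha,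
    aeval_algebraMap_apply_eq_algebraMap_eval, eval_prod_X_add_C_of_mem hA ha, map_zero, zero_add]

end AddSubgroup

end Polynomial

/-- Lemma 2.2 of Hartmann–Shepler, "Jacobians of reflection groups".
Let `F` be a field and `A ⊆ F` a finite additive subgroup.  Then the polynomial
`f(X) = ∏_{a ∈ A} (X + a)` is additive: the identity `f(X + Y) = f(X) + f(Y)`
holds in the polynomial ring `F[X, Y]` (realized here as `MvPolynomial (Fin 2) F`,
with `X = X 0` and `Y = X 1`). -/
theorem prod_X_add_mem_finite_addSubgroup_isAdditive {F : Type*} [Field F]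
    (A : AddSubgroup F) (hA : (A : Set F).Finite)
    (f : Polynomial F) (hf : f = ∏ a ∈ hA.toFinset, (Polynomial.X + Polynomial.C a)) :
    Polynomial.aeval (X 0 + X 1 : MvPolynomial (Fin 2) F) f =
      Polynomial.aeval (X 0 : MvPolynomial (Fin 2) F) f +
        Polynomial.aeval (X 1 : MvPolynomial (Fin 2) F) f := by
  subst hf
  set s := hA.toFinset.map ⟨algebraMap F (MvPolynomial (Fin 1) F), C_injective _ _⟩
  have hs : s.Nonempty := ⟨_, Finset.mem_map_of_mem _ (hA.mem_toFinset.2 A.zero_mem)⟩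
  have key := Polynomial.aeval_X_add_C_eq_of_aeval_add (c := (X 0 : MvPolynomial (Fin 1) F)) hs
    (by rw [Finset.card_map]; exact Polynomial.natDegree_prod_X_add_C_le _)
    (by
      simp only [s, Finset.forall_mem_map]
      exact fun a ha =>
        Polynomial.aeval_algebraMap_add_prod_X_add_C_eq_add hA _ (hA.mem_toFinset.1 ha))
  have hX1 : finSuccEquiv F 1 (X 1) = Polynomial.C (X 0) := finSuccEquiv_X_succ (j := 0)
  apply (finSuccEquiv F 1).injective
  rw [map_add, ← Polynomial.aeval_algHom_apply, ← Polynomial.aeval_algHom_apply,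
    ← Polynomial.aeval_algHom_apply, map_add, finSuccEquiv_X_zero, hX1, key]
end
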